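/- For all real U > 0 and V > 0: f(U, V) < 0. -/
import Mathlib


/-- `f(U,V) = (2U+V)/√(V²+2UV) − (2U+2V)/√(V²+UV) + 1`. -/
noncomputable def fUV (U V : ℝ) : ℝ :=
  (2 * U + V) / Real.sqrt (V ^ 2 + 2 * U * V)
    - (2 * U + 2 * V) / Real.sqrt (V ^ 2 + U * V) + 1

/-- `f(U,V) < 0` for all `U, V > 0`. -/
theorem fUV_neg (U V : ℝ) (hU : 0 < U) (hV : 0 < V) : fUV U V < 0 := by
  unfold fUV
  have hV2 : (0:ℝ) < V + 2*U := by linarith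
  have hV1 : (0:ℝ) < V + U := by linarith
  have e1 : V ^ 2 + 2 * U * V = V * (V + 2*U) := by ring
  have e2 : V ^ 2 + U * V = V * (V + U) := by ring
  rw [e1, e2, Real.sqrt_mul hV.le, Real.sqrt_mul hV.le]
  set sV := Real.sqrt V with hsV
  set s1 := Real.sqrt (V + 2*U) with hs1
  set s2 := Real.sqrt (V + U) with hs2
  have hsVp : 0 < sV := Real.sqrt_pos.mpr hV
  have hs1p : 0 < s1 := Real.sqrt_pos.mpr hV2
  have hs2p : 0 < s2 := Real.sqrt_pos.mpr hV1
  have q1 : s1^2 = V + 2*U := Real.sq_sqrt hV2.le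
  have q2 : s2^2 = V + U := Real.sq_sqrt hV1.le
  have qV : sV^2 = V := Real.sq_sqrt hV.le
  have h12 : sV < s1 := by
    apply Real.sqrt_lt_sqrt hV.le; linarith
  have key : s1 + sV - 2 * s2 < 0 := by
    nlinarith [mul_pos (sub_pos.mpr h12) (sub_pos.mpr h12),
      mul_pos hs2p (add_pos hs1p hsVp)]
  have n1 : 2 * U + V = s1^2 := by linarith
  have n2 : 2 * U + 2 * V = 2 * s2^2 := by linarith
  rw [n1, n2]
  have e5 : s1^2 / (sV * s1) - 2 * s2^2 / (sV * s2) + 1 = (s1 + sV - 2 * s2) / sV := by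
    field_simp
    ring
  rw [e5]
  exact div_neg_of_neg_of_pos key hsVp
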